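/- arXiv:2005.12983 — 12 statements merged into one kernel-verified Lean document; each statement's English description precedes it below -/
import Mathlib

section
/- A proper ideal I of a commutative ring R is an n-almost 1-absorbing prime ideal for every n ≥ 2 if and only if I is a w-1-absorbing prime ideal (i.e., φ-1-absorbing prime with φ(I) = ⋂_{n≥1} I^n). -/
/-- `I` is a `φ`-1-absorbing prime ideal (with `φ(I)` given as the set `S`,
which may be `∅`): for all nonunits `x, y, z` with `x*y*z ∈ I \ S`,
either `x*y ∈ I` or `z ∈ I`. -/
def Phi1AbsPrime {R : Type*} [CommRing R] (I : Ideal R) (S : Set R) : Prop :=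
  ∀ x y z : R, ¬ IsUnit x → ¬ IsUnit y → ¬ IsUnit z →
    x * y * z ∈ I → x * y * z ∉ S → x * y ∈ I ∨ z ∈ I

section Phi1AbsPrime

variable {R : Type*} [CommRing R] {I : Ideal R}

theorem Phi1AbsPrime.mono {S T : Set R} (h : Phi1AbsPrime I S) (hST : (I : Set R) ∩ S ⊆ T) :
    Phi1AbsPrime I T :=
  fun x y z hx hy hz hI hT => h x y z hx hy hz hI fun hS => hT (hST ⟨hI, hS⟩)

theorem phi1AbsPrime_iInter {ι : Sort*} {S : ι → Set R} (h : ∀ i, Phi1AbsPrime I (S i)) :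
    Phi1AbsPrime I (⋂ i, S i) := by
  intro x y z hx hy hz hI hS
  obtain ⟨i, hi⟩ := not_forall.1 (Set.mem_iInter.not.1 hS)
  exact h i x y z hx hy hz hI hi

end Phi1AbsPrime

theorem stmt_2_general {R : Type*} [CommRing R] (I : Ideal R) :
    (∀ n : ℕ, 2 ≤ n → Phi1AbsPrime I ((I ^ n : Ideal R) : Set R)) ↔
      Phi1AbsPrime I {r : R | ∀ n : ℕ, 1 ≤ n → r ∈ I ^ n} := by
  constructor
  · intro h
    refine (phi1AbsPrime_iInter fun n : {n : ℕ // 2 ≤ n} => h n n.2).mono ?_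
    rintro r ⟨hrI, hr⟩ n hn
    obtain rfl | hn2 := hn.eq_or_lt
    · simpa using hrI
    · exact Set.mem_iInter.1 hr ⟨n, hn2⟩
  · intro h n hn
    exact h.mono fun r hr => hr.2 n (by omega)

theorem stmt_2 {R : Type*} [CommRing R] (I : Ideal R) (hI : I ≠ ⊤) :
    (∀ n : ℕ, 2 ≤ n → Phi1AbsPrime I ((I ^ n : Ideal R) : Set R)) ↔
      Phi1AbsPrime I {r : R | ∀ n : ℕ, 1 ≤ n → r ∈ I ^ n} :=
  stmt_2_general I
end

section
/- In Z_{pq²} with p, q distinct primes, the zero ideal is a weakly 1-absorbing prime ideal but not a 1-absorbing prime ideal. -/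
/-! The zero ideal is weakly 1-absorbing prime in every ring, since `x * y * z ∈ ⊥ \ {0}` never
happens. In `ℤ/(abc)` with `a, b, c > 1`, the product `a * b * c = 0` of nonunits has neither
`a * b` nor `c` zero, so `0` is not 1-absorbing prime; take `a = p`, `b = c = q`. -/

namespace ZMod

theorem not_isUnit_natCast_of_dvd {m n : ℕ} (hmn : m ∣ n) (hm : m ≠ 1) :
    ¬ IsUnit (m : ZMod n) := by
  rw [isUnit_iff_coprime]
  exact fun hcop => hm (hcop.eq_one_of_dvd hmn)

theorem natCast_ne_zero_of_lt {m n : ℕ} (hm : m ≠ 0) (hmn : m < n) : (m : ZMod n) ≠ 0 := by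
  rw [Ne, natCast_eq_zero_iff]
  exact Nat.not_dvd_of_pos_of_lt (Nat.pos_of_ne_zero hm) hmn

theorem not_phi1AbsPrime_bot_empty {a b c : ℕ} (ha : 1 < a) (hb : 1 < b) (hc : 1 < c) :
    ¬ Phi1AbsPrime (⊥ : Ideal (ZMod (a * b * c))) ∅ := by
  intro h
  have hab : 1 < a * b := Nat.one_lt_mul_iff.mpr ⟨by omega, by omega, by omega⟩
  have hzero : (a : ZMod (a * b * c)) * b * c = 0 := by exact_mod_cast natCast_self (a * b * c)
  have hab_ne : (a : ZMod (a * b * c)) * b ≠ 0 := by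
    exact_mod_cast natCast_ne_zero_of_lt (by omega) (lt_mul_right (by omega) hc)
  have hc_ne : (c : ZMod (a * b * c)) ≠ 0 :=
    natCast_ne_zero_of_lt (by omega) (lt_mul_left (by omega) hab)
  have hnu {m : ℕ} (hm : m ∣ a * b * c) (h1 : 1 < m) : ¬ IsUnit (m : ZMod (a * b * c)) :=
    not_isUnit_natCast_of_dvd hm h1.ne'
  rcases h a b c (hnu ((dvd_mul_right a b).mul_right c) ha)
      (hnu ((dvd_mul_left b a).mul_right c) hb) (hnu (dvd_mul_left c (a * b)) hc)
      (Ideal.mem_bot.mpr hzero) (Set.notMem_empty _) with hab_mem | hc_mem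
  · exact hab_ne (Ideal.mem_bot.mp hab_mem)
  · exact hc_ne (Ideal.mem_bot.mp hc_mem)

end ZMod

theorem stmt_3_general (p q : ℕ) (hp : p.Prime) (hq : q.Prime) :
    Phi1AbsPrime (⊥ : Ideal (ZMod (p * q ^ 2))) {0} ∧
    ¬ Phi1AbsPrime (⊥ : Ideal (ZMod (p * q ^ 2))) (∅ : Set (ZMod (p * q ^ 2))) := by
  refine ⟨fun x y z _ _ _ hxyz hne => absurd (Ideal.mem_bot.mp hxyz) hne, ?_⟩
  rw [show p * q ^ 2 = p * q * q by ring]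
  exact ZMod.not_phi1AbsPrime_bot_empty hp.one_lt hq.one_lt hq.one_lt

theorem stmt_3 (p q : ℕ) (hp : p.Prime) (hq : q.Prime) (hpq : p ≠ q) :
    Phi1AbsPrime (⊥ : Ideal (ZMod (p * q ^ 2))) {0} ∧
    ¬ Phi1AbsPrime (⊥ : Ideal (ZMod (p * q ^ 2))) (∅ : Set (ZMod (p * q ^ 2))) :=
  stmt_3_general p q hp hq
end

section
/- In R = Z/(pq²) with p, q distinct primes, the ideal I = (q²) is a weakly 1-absorbing prime ideal (i.e., φ-1-absorbing prime with φ(I) = 0) but not a weakly prime ideal (φ-prime with φ(I) = 0), since q·q ∈ I − {0} and q ∉ I. -/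
/-!
If `a` and `b²` are coprime with `a * b² = 0`, a nonzero multiple of `b²` has no factor
divisible by `a`, since it would lie in `(a) ∩ (b²) = (a b²) = 0`. When every nonunit is
divisible by `a` or `b`, the nonunit factors `x, y` of a nonzero `x y z ∈ (b²)` are therefore
both divisible by `b`, so `x y ∈ (b²)`. In `ℤ/(p q²)` this applies with `a = p`, `b = q`,
since the maximal ideals are `(p)` and `(q)`.
-/

theorem phi1AbsPrime_span_sq_of_isCoprime {R : Type*} [CommRing R] {a b : R}
    (hab : IsCoprime a (b ^ 2)) (h0 : a * b ^ 2 = 0)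
    (hdvd : ∀ x : R, ¬ IsUnit x → a ∣ x ∨ b ∣ x) :
    Phi1AbsPrime (Ideal.span {b ^ 2}) {0} := by
  intro x y z hx hy _ hmem hne
  rw [Ideal.mem_span_singleton] at hmem ⊢
  have hb_dvd : ∀ w, ¬ IsUnit w → w ∣ x * y * z → b ∣ w := by
    intro w hw hwd
    refine (hdvd w hw).resolve_left fun ha => hne ?_
    obtain ⟨c, hc⟩ := hab.mul_dvd (ha.trans hwd) hmem
    rw [Set.mem_singleton_iff, hc, h0, zero_mul]
  left
  rw [sq]
  exact mul_dvd_mul (hb_dvd x hx (dvd_mul_of_dvd_left (dvd_mul_right x y) z))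
    (hb_dvd y hy (dvd_mul_of_dvd_left (dvd_mul_left y x) z))

theorem ZMod.exists_prime_dvd_of_not_isUnit {n : ℕ} [NeZero n] {x : ZMod n}
    (hx : ¬ IsUnit x) : ∃ r : ℕ, r.Prime ∧ r ∣ n ∧ (r : ZMod n) ∣ x := by
  rw [← ZMod.natCast_zmod_val x, ZMod.isUnit_iff_coprime, Nat.Prime.not_coprime_iff_dvd] at hx
  obtain ⟨r, hr, hrx, hrn⟩ := hx
  exact ⟨r, hr, hrn, by simpa using Nat.cast_dvd_cast (α := ZMod n) hrx⟩

theorem ZMod.natCast_dvd_or_natCast_dvd_of_not_isUnit {p q k : ℕ} (hp : p.Prime) (hq : q.Prime)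
    {x : ZMod (p * q ^ k)} (hx : ¬ IsUnit x) : (p : ZMod (p * q ^ k)) ∣ x ∨ (q : ZMod (p * q ^ k)) ∣ x := by
  have : NeZero (p * q ^ k) := ⟨mul_ne_zero hp.ne_zero (pow_ne_zero _ hq.ne_zero)⟩
  obtain ⟨r, hr, hrn, hrx⟩ := ZMod.exists_prime_dvd_of_not_isUnit hx
  rcases hr.dvd_mul.mp hrn with hrp | hrq
  · exact .inl ((Nat.prime_dvd_prime_iff_eq hr hp).mp hrp ▸ hrx)
  · exact .inr ((Nat.prime_dvd_prime_iff_eq hr hq).mp (hr.dvd_of_dvd_pow hrq) ▸ hrx)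

theorem ZMod.natCast_dvd_natCast_iff {m n k : ℕ} (hm : m ∣ n) :
    (m : ZMod n) ∣ (k : ZMod n) ↔ m ∣ k := by
  refine ⟨fun h => ?_, Nat.cast_dvd_cast⟩
  have := map_dvd (ZMod.castHom hm (ZMod m)) h
  rwa [map_natCast, map_natCast, ZMod.natCast_self, zero_dvd_iff, ZMod.natCast_eq_zero_iff] at this

theorem stmt_6 (p q : ℕ) (hp : p.Prime) (hq : q.Prime) (hpq : p ≠ q) :
    let R := ZMod (p * q ^ 2)
    let I : Ideal R := Ideal.span {(q : R) ^ 2}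
    Phi1AbsPrime I {0} ∧
      ¬ (∀ x y : R, x * y ≠ 0 → x * y ∈ I → x ∈ I ∨ y ∈ I) ∧
      (q : R) * (q : R) ∈ I ∧ (q : R) * (q : R) ≠ 0 ∧ (q : R) ∉ I := by
  intro R I
  have hcop : IsCoprime (p : R) ((q : R) ^ 2) := by
    exact_mod_cast (((Nat.coprime_primes hp hq).mpr hpq).pow_right 2).cast
  have hzero : (p : R) * (q : R) ^ 2 = 0 := by
    rw [← Nat.cast_pow, ← Nat.cast_mul, ZMod.natCast_self]
  have hqq_mem : (q : R) * q ∈ I := by rw [← sq]; exact Ideal.mem_span_singleton_self _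
  have hqq_ne : (q : R) * q ≠ 0 := by
    rw [← sq, ← Nat.cast_pow, Ne, ZMod.natCast_eq_zero_iff]
    intro h
    exact hp.one_lt.ne' (Nat.dvd_one.mp ((Nat.mul_dvd_mul_iff_right (pow_pos hq.pos 2)).mp
      (by simpa using h)))
  have hq_nmem : (q : R) ∉ I := by
    rw [Ideal.mem_span_singleton, ← Nat.cast_pow, ZMod.natCast_dvd_natCast_iff (dvd_mul_left _ _)]
    intro h
    have : 2 ≤ 1 := (Nat.pow_dvd_pow_iff_le_right hq.one_lt).mp (by rwa [pow_one])
    omega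
  refine ⟨phi1AbsPrime_span_sq_of_isCoprime hcop hzero
      (fun x hx => ZMod.natCast_dvd_or_natCast_dvd_of_not_isUnit hp hq hx),
    fun h => ?_, hqq_mem, hqq_ne, hq_nmem⟩
  rcases h q q hqq_ne hqq_mem with h | h <;> exact hq_nmem h
end

section
/- Let I be a proper ideal of a commutative ring R and φ a function on ideals with φ(I) ⊆ I. Then I is φ-1-absorbing prime if and only if for all nonunits x, y ∈ R with xy ∉ I, the colon ideal (I : xy) equals I ∪ (φ(I) : xy). -/
theorem not_isUnit_of_mul_mem_of_notMem {R : Type*} [CommRing R] {I : Ideal R} {r a : R}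
    (hr : r * a ∈ I) (ha : a ∉ I) : ¬IsUnit r :=
  fun hu => ha ((I.unit_mul_mem_iff_mem hu).1 hr)

theorem phi1AbsPrime_iff {R : Type*} [CommRing R] {I : Ideal R} {S : Set R} :
    Phi1AbsPrime I S ↔
      ∀ x y : R, ¬IsUnit x → ¬IsUnit y → x * y ∉ I →
        ∀ r, r * (x * y) ∈ I → r ∈ I ∨ r * (x * y) ∈ S := by
  constructor
  · intro h x y hx hy hxy r hr
    by_cases hrS : r * (x * y) ∈ S
    · exact Or.inr hrS
    · have hr_nonunit : ¬IsUnit r := not_isUnit_of_mul_mem_of_notMem hr hxy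
      rw [mul_comm] at hr hrS
      exact Or.inl ((h x y r hx hy hr_nonunit hr hrS).resolve_left hxy)
  · intro h x y z hx hy _ hz hzS
    by_cases hxy : x * y ∈ I
    · exact Or.inl hxy
    · rw [mul_comm] at hz hzS
      exact Or.inr ((h x y hx hy hxy z hz).resolve_right hzS)

theorem setOf_mul_mem_eq_union_iff {R : Type*} [CommRing R] {I : Ideal R} {S : Set R}
    (hS : S ⊆ I) (a : R) :
    {r : R | r * a ∈ I} = (I : Set R) ∪ {r : R | r * a ∈ S} ↔
      ∀ r, r * a ∈ I → r ∈ I ∨ r * a ∈ S := by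
  have hsupset : (I : Set R) ∪ {r : R | r * a ∈ S} ⊆ {r : R | r * a ∈ I} := by
    rintro r (hr | hr)
    exacts [I.mul_mem_right a hr, hS hr]
  rw [Set.Subset.antisymm_iff, and_iff_left hsupset]
  rfl

theorem stmt_7_general {R : Type*} [CommRing R] (I : Ideal R)
    (φI : Ideal R) (hφ : φI ≤ I) :
    Phi1AbsPrime I (φI : Set R) ↔
      ∀ x y : R, ¬ IsUnit x → ¬ IsUnit y → x * y ∉ I →
        {r : R | r * (x * y) ∈ I} = (I : Set R) ∪ {r : R | r * (x * y) ∈ φI} := by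
  rw [phi1AbsPrime_iff]
  exact forall₅_congr fun x y _ _ _ => (setOf_mul_mem_eq_union_iff hφ (x * y)).symm

theorem stmt_7 {R : Type*} [CommRing R] (I : Ideal R) (hI : I ≠ ⊤)
    (φI : Ideal R) (hφ : φI ≤ I) :
    Phi1AbsPrime I (φI : Set R) ↔
      ∀ x y : R, ¬ IsUnit x → ¬ IsUnit y → x * y ∉ I →
        {r : R | r * (x * y) ∈ I} = (I : Set R) ∪ {r : R | r * (x * y) ∈ φI} :=
  stmt_7_general I φI hφ
end

section
/- Let I be a proper ideal of a commutative ring R. Then I is φ-1-absorbing prime if and only if for all nonunits x, y ∈ R with xy ∉ I, either (I : xy) = I or (I : xy) = (φ(I) : xy). -/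
/-! For `a = x * y ∉ I`, absorption says exactly that `(I : a) ⊆ I ∪ (φ(I) : a)` (a unit in
`(I : a)` would put `a` in `I`). An ideal covered by two ideals lies in one of them, and `(I : a)`
contains both `I` and `(φ(I) : a)`, so the covering is one of the two equalities. -/

namespace Ideal

variable {R : Type*} [CommRing R]

lemma coe_colon_singleton (I : Ideal R) (a : R) : (I.colon {a} : Set R) = {r | r * a ∈ I} := by
  ext r
  simp [Submodule.mem_colon_singleton]

theorem colon_subset_union_iff {I J : Ideal R} (hJ : J ≤ I) (a : R) :
    (I.colon {a} : Set R) ⊆ I ∪ J.colon {a} ↔ I.colon {a} = I ∨ I.colon {a} = J.colon {a} := by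
  rw [subset_union]
  refine or_congr ⟨fun h ↦ le_antisymm h le_colon, le_of_eq⟩
    ⟨fun h ↦ le_antisymm h (Submodule.colon_mono hJ le_rfl), le_of_eq⟩

end Ideal

theorem phi1AbsPrime_iff_colon_subset {R : Type*} [CommRing R] (I : Ideal R) (S : Set R) :
    Phi1AbsPrime I S ↔ ∀ x y : R, ¬ IsUnit x → ¬ IsUnit y → x * y ∉ I →
      {r | r * (x * y) ∈ I} ⊆ (I : Set R) ∪ {r | r * (x * y) ∈ S} := by
  constructor
  · intro h x y hx hy hxy r (hr : r * (x * y) ∈ I)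
    by_cases hru : IsUnit r
    · exact absurd ((I.unit_mul_mem_iff_mem hru).1 hr) hxy
    by_cases hS : r * (x * y) ∈ S
    · exact Or.inr hS
    rw [mul_comm] at hr hS
    exact Or.inl ((h x y r hx hy hru hr hS).resolve_left hxy)
  · intro h x y z hx hy _ hI hS
    by_cases hxy : x * y ∈ I
    · exact Or.inl hxy
    rw [mul_comm] at hI hS
    exact Or.inr ((h x y hx hy hxy hI).resolve_right hS)

theorem stmt_8_general {R : Type*} [CommRing R] (I : Ideal R)
    (φI : Ideal R) (hφ : φI ≤ I) :
    Phi1AbsPrime I (φI : Set R) ↔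
      ∀ x y : R, ¬ IsUnit x → ¬ IsUnit y → x * y ∉ I →
        {r : R | r * (x * y) ∈ I} = (I : Set R) ∨
          {r : R | r * (x * y) ∈ I} = {r : R | r * (x * y) ∈ φI} := by
  rw [phi1AbsPrime_iff_colon_subset]
  refine forall₄_congr fun x y _ _ ↦ imp_congr_right fun _ ↦ ?_
  simpa only [Ideal.coe_colon_singleton, SetLike.coe_set_eq, SetLike.ext'_iff, SetLike.mem_coe]
    using Ideal.colon_subset_union_iff hφ (x * y)

theorem stmt_8 {R : Type*} [CommRing R] (I : Ideal R) (hI : I ≠ ⊤)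
    (φI : Ideal R) (hφ : φI ≤ I) :
    Phi1AbsPrime I (φI : Set R) ↔
      ∀ x y : R, ¬ IsUnit x → ¬ IsUnit y → x * y ∉ I →
        {r : R | r * (x * y) ∈ I} = (I : Set R) ∨
          {r : R | r * (x * y) ∈ I} = {r : R | r * (x * y) ∈ φI} :=
  stmt_8_general I φI hφ
end

section
/- Let I be a proper ideal of a commutative ring R. Then I is φ-1-absorbing prime if and only if for all nonunits x, y ∈ R and every proper ideal J of R with xyJ ⊆ I and xyJ ⊄ φ(I), either xy ∈ I or J ⊆ I. -/
/-! The forward direction tests the definition on elements of `J`: one `a ∈ J` with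
`xya ∉ φ(I)` is enough, since for `b ∈ J` with `xyb ∈ φ(I)` the element `a + b` still has
`xy(a + b) ∉ φ(I)`, whence `b = (a + b) - a ∈ I`. The converse takes `J = (z)`. -/

section

variable {R : Type*} [CommRing R]

theorem Ideal.forall_mem_span_singleton_mul_mem_iff (I : Ideal R) (c z : R) :
    (∀ a ∈ Ideal.span {z}, c * a ∈ I) ↔ c * z ∈ I := by
  refine ⟨fun h => h z (Ideal.mem_span_singleton_self z), fun h a ha => ?_⟩
  obtain ⟨r, rfl⟩ := Ideal.mem_span_singleton'.mp ha
  rw [mul_left_comm]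
  exact I.mul_mem_left r h

namespace Phi1AbsPrime

variable {I φI J : Ideal R} {x y : R}

theorem le_of_mul_notMem (h : Phi1AbsPrime I φI) (hx : ¬IsUnit x) (hy : ¬IsUnit y)
    (hxy : x * y ∉ I) (hJ : J ≠ ⊤) (hJI : ∀ a ∈ J, x * y * a ∈ I)
    {a : R} (haJ : a ∈ J) (haφ : x * y * a ∉ φI) : J ≤ I := by
  have mem_of_notMem_φI : ∀ b ∈ J, x * y * b ∉ φI → b ∈ I := fun b hbJ hbφ =>
    (h x y b hx hy (coe_subset_nonunits hJ hbJ) (hJI b hbJ) hbφ).resolve_left hxy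
  have haI : a ∈ I := mem_of_notMem_φI a haJ haφ
  intro b hbJ
  by_cases hbφ : x * y * b ∈ φI
  · have habφ : x * y * (a + b) ∉ φI := by
      rwa [mul_add, φI.add_mem_iff_left hbφ]
    have habI : a + b ∈ I := mem_of_notMem_φI (a + b) (J.add_mem haJ hbJ) habφ
    simpa using I.sub_mem habI haI
  · exact mem_of_notMem_φI b hbJ hbφ

theorem of_forall_ideal
    (h : ∀ x y : R, ¬IsUnit x → ¬IsUnit y → ∀ J : Ideal R, J ≠ ⊤ →
      (∀ a ∈ J, x * y * a ∈ I) → ¬(∀ a ∈ J, x * y * a ∈ φI) → x * y ∈ I ∨ J ≤ I) :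
    Phi1AbsPrime I φI := by
  intro x y z hx hy hz hxyz hxyzφ
  have hzJ : Ideal.span {z} ≠ ⊤ := by rwa [Ne, Ideal.span_singleton_eq_top]
  have hzI : ∀ a ∈ Ideal.span {z}, x * y * a ∈ I :=
    (I.forall_mem_span_singleton_mul_mem_iff _ z).mpr hxyz
  have hzφ : ¬∀ a ∈ Ideal.span {z}, x * y * a ∈ φI := by
    rwa [φI.forall_mem_span_singleton_mul_mem_iff]
  exact (h x y hx hy _ hzJ hzI hzφ).imp_right (Ideal.span_singleton_le_iff_mem I).mp

end Phi1AbsPrime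

end

theorem stmt_9_general {R : Type*} [CommRing R] (I : Ideal R)
    (φI : Ideal R) :
    Phi1AbsPrime I (φI : Set R) ↔
      ∀ x y : R, ¬ IsUnit x → ¬ IsUnit y → ∀ J : Ideal R, J ≠ ⊤ →
        (∀ a ∈ J, x * y * a ∈ I) → ¬ (∀ a ∈ J, x * y * a ∈ φI) →
          x * y ∈ I ∨ J ≤ I := by
  refine ⟨fun h x y hx hy J hJ hJI hJφ => ?_, Phi1AbsPrime.of_forall_ideal⟩
  push Not at hJφ
  obtain ⟨a, haJ, haφ⟩ := hJφ
  by_cases hxy : x * y ∈ I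
  · exact Or.inl hxy
  · exact Or.inr (h.le_of_mul_notMem hx hy hxy hJ hJI haJ haφ)

theorem stmt_9 {R : Type*} [CommRing R] (I : Ideal R) (hI : I ≠ ⊤)
    (φI : Ideal R) (hφ : φI ≤ I) :
    Phi1AbsPrime I (φI : Set R) ↔
      ∀ x y : R, ¬ IsUnit x → ¬ IsUnit y → ∀ J : Ideal R, J ≠ ⊤ →
        (∀ a ∈ J, x * y * a ∈ I) → ¬ (∀ a ∈ J, x * y * a ∈ φI) →
          x * y ∈ I ∨ J ≤ I :=
  stmt_9_general I φI
end

section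
/- Let I be a proper ideal of a commutative ring R. Then I is φ-1-absorbing prime if and only if for all proper ideals J, K, L of R with JKL ⊆ I and JKL ⊄ φ(I), either JK ⊆ I or L ⊆ I. -/
theorem Submodule.le_of_diff_subset {R M : Type*} [Ring R] [AddCommGroup M] [Module R M]
    {L I N : Submodule R M} (hLI : ¬ L ≤ I) (h : (L : Set M) \ I ⊆ N) : L ≤ N := by
  obtain ⟨z, hzL, hzI⟩ := SetLike.not_le_iff_exists.mp hLI
  intro c hcL
  by_cases hcI : c ∈ I
  · have hczI : c + z ∉ I := fun h' => hzI (by simpa using sub_mem h' hcI)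
    simpa using sub_mem (h ⟨L.add_mem hcL hzL, hczI⟩) (h ⟨hzL, hzI⟩)
  · exact h ⟨hcL, hcI⟩

namespace Ideal

variable {R : Type*} [CommRing R]

theorem mul_le_iff_le_colon {J K N : Ideal R} : J * K ≤ N ↔ J ≤ N.colon K := by
  rw [Ideal.mul_le, SetLike.le_def]
  simp only [Submodule.mem_colon, smul_eq_mul, SetLike.mem_coe]

theorem mem_colon_iff_le_colon_singleton {N L : Ideal R} {r : R} :
    r ∈ N.colon L ↔ L ≤ N.colon {r} := by
  rw [Submodule.mem_colon, SetLike.le_def]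
  simp only [Submodule.mem_colon_singleton, smul_eq_mul, SetLike.mem_coe, mul_comm r]

theorem mul_le_of_forall_mul_mem {J K I N : Ideal R} (hJK : ¬ J * K ≤ I)
    (h : ∀ a ∈ J, ∀ b ∈ K, a * b ∉ I → a * b ∈ N) : J * K ≤ N := by
  rw [mul_le_iff_le_colon] at hJK ⊢
  refine Submodule.le_of_diff_subset hJK fun a ⟨haJ, haI⟩ => ?_
  rw [SetLike.mem_coe, mem_colon_iff_le_colon_singleton] at haI ⊢
  refine Submodule.le_of_diff_subset haI fun b ⟨hbK, hbI⟩ => ?_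
  simp only [SetLike.mem_coe, Submodule.mem_colon_singleton, smul_eq_mul, mul_comm b] at hbI ⊢
  exact h a haJ b hbK hbI

theorem not_isUnit_of_mem {I : Ideal R} (hI : I ≠ ⊤) {x : R} (hx : x ∈ I) : ¬ IsUnit x :=
  fun hu => hI (I.eq_top_of_isUnit_mem hx hu)

end Ideal

section

variable {R : Type*} [CommRing R]

open Ideal in
theorem Phi1AbsPrime.mul_le_or_le {I N : Ideal R} (hIN : Phi1AbsPrime I N) {J K L : Ideal R}
    (hJ : J ≠ ⊤) (hK : K ≠ ⊤) (hL : L ≠ ⊤) (hJKL : J * K * L ≤ I) (hN : ¬ J * K * L ≤ N) :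
    J * K ≤ I ∨ L ≤ I := by
  by_contra! ⟨hJK, hLI⟩
  refine hN (mul_le_iff_le_colon.mpr (mul_le_of_forall_mul_mem hJK fun a ha b hb hab => ?_))
  rw [mem_colon_iff_le_colon_singleton]
  refine Submodule.le_of_diff_subset hLI fun c ⟨hc, hcI⟩ => ?_
  rw [SetLike.mem_coe, Submodule.mem_colon_singleton, smul_eq_mul, mul_comm]
  by_contra habc
  have habcI : a * b * c ∈ I := hJKL (mul_mem_mul (mul_mem_mul ha hb) hc)
  exact (hIN a b c (not_isUnit_of_mem hJ ha) (not_isUnit_of_mem hK hb) (not_isUnit_of_mem hL hc)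
    habcI habc).elim hab hcI

theorem phi1AbsPrime_of_mul_le_or_le {I N : Ideal R}
    (h : ∀ J K L : Ideal R, J ≠ ⊤ → K ≠ ⊤ → L ≠ ⊤ →
      J * K * L ≤ I → ¬ J * K * L ≤ N → J * K ≤ I ∨ L ≤ I) :
    Phi1AbsPrime I N := by
  intro x y z hx hy hz hI hN
  have hspan : ∀ {r : R}, ¬ IsUnit r → Ideal.span {r} ≠ ⊤ := fun hr =>
    mt Ideal.span_singleton_eq_top.mp hr
  have hprincipal :=
    h (Ideal.span {x}) (Ideal.span {y}) (Ideal.span {z}) (hspan hx) (hspan hy) (hspan hz)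
  simp only [Ideal.span_singleton_mul_span_singleton, Ideal.span_singleton_le_iff_mem]
    at hprincipal
  exact hprincipal hI hN

end

theorem stmt_10_general {R : Type*} [CommRing R] (I : Ideal R)
    (φI : Ideal R) :
    Phi1AbsPrime I (φI : Set R) ↔
      ∀ J K L : Ideal R, J ≠ ⊤ → K ≠ ⊤ → L ≠ ⊤ →
        J * K * L ≤ I → ¬ (J * K * L ≤ φI) → J * K ≤ I ∨ L ≤ I :=
  ⟨fun h _ _ _ => h.mul_le_or_le, phi1AbsPrime_of_mul_le_or_le⟩

theorem stmt_10 {R : Type*} [CommRing R] (I : Ideal R) (hI : I ≠ ⊤)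
    (φI : Ideal R) (hφ : φI ≤ I) :
    Phi1AbsPrime I (φI : Set R) ↔
      ∀ J K L : Ideal R, J ≠ ⊤ → K ≠ ⊤ → L ≠ ⊤ →
        J * K * L ≤ I → ¬ (J * K * L ≤ φI) → J * K ≤ I ∨ L ≤ I :=
  stmt_10_general I φI
end

section
/- Let I be a φ-1-absorbing prime ideal of a commutative ring R and suppose (x, y, z) is a φ-1-triple zero of I (i.e., x, y, z are nonunits with xyz ∈ φ(I), xy ∉ I, z ∉ I). Then xyI ⊆ φ(I). -/
theorem Ideal.not_isUnit_of_mul_mem {R : Type*} [CommRing R] {I : Ideal R} {b c : R}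
    (hbc : b * c ∈ I) (hb : b ∉ I) : ¬ IsUnit c :=
  fun hu => hb ((Ideal.mul_unit_mem_iff_mem I hu).mp hbc)

theorem stmt_11_general {R : Type*} [CommRing R] (I : Ideal R)
    (φI : Ideal R) (hφ : φI ≤ I) (h : Phi1AbsPrime I (φI : Set R))
    (x y z : R) (hx : ¬ IsUnit x) (hy : ¬ IsUnit y)
    (h1 : x * y * z ∈ φI) (h2 : x * y ∉ I) (h3 : z ∉ I) :
    ∀ a ∈ I, x * y * a ∈ φI := by
  intro a ha
  have hmem : x * y * (z + a) ∈ I := by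
    rw [mul_add]
    exact I.add_mem (hφ h1) (I.mul_mem_left _ ha)
  by_contra hxya
  have hnot : x * y * (z + a) ∉ φI := fun hp =>
    hxya (by simpa [mul_add] using φI.sub_mem hp h1)
  rcases h x y (z + a) hx hy (I.not_isUnit_of_mul_mem hmem h2) hmem hnot with hxy | hza
  · exact h2 hxy
  · exact h3 ((I.add_mem_iff_left ha).mp hza)

theorem stmt_11 {R : Type*} [CommRing R] (I : Ideal R) (hI : I ≠ ⊤)
    (φI : Ideal R) (hφ : φI ≤ I) (h : Phi1AbsPrime I (φI : Set R))
    (x y z : R) (hx : ¬ IsUnit x) (hy : ¬ IsUnit y) (hz : ¬ IsUnit z)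
    (h1 : x * y * z ∈ φI) (h2 : x * y ∉ I) (h3 : z ∉ I) :
    ∀ a ∈ I, x * y * a ∈ φI :=
  stmt_11_general I φI hφ h x y z hx hy h1 h2 h3
end

section
/- Let I be a φ-1-absorbing prime ideal of a commutative ring R with a φ-1-triple zero (x, y, z) such that additionally xz ∉ I and yz ∉ I. Then xzI ⊆ φ(I), yzI ⊆ φ(I), xI² ⊆ φ(I), yI² ⊆ φ(I), zI² ⊆ φ(I), and I³ ⊆ φ(I). -/
/-!
If `(x, y, z)` is a `φ`-1-triple zero of `I` with `xz, yz ∉ I`, then so is every perturbation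
`(x + a, y + b, z + c)` with `a, b, c ∈ I`: modulo `I` nothing changes, and `x + a` stays a
nonunit because `yz (x + a) ∈ I` while `yz ∉ I` (similarly for the other two entries).
Hence `(x + a)(y + b)(z + c) ∈ φ(I)` for all `a, b, c ∈ I`, and taking finite differences
in `a`, `b`, `c` of this trilinear expression isolates each mixed term `xza`, `xab`, `abc`, ….
-/

theorem Ideal.not_isUnit_add_of_mul_mem {R : Type*} [CommRing R] {I : Ideal R} {r t a : R}
    (hr : r ∉ I) (hrt : r * t ∈ I) (ha : a ∈ I) : ¬ IsUnit (t + a) := fun hu =>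
  hr <| (I.mul_unit_mem_iff_mem hu).1 <| by
    rw [mul_add]
    exact I.add_mem hrt (I.mul_mem_left r ha)

theorem Ideal.pow_three_le_of_forall_mul_mul_mem {R : Type*} [CommRing R] {I J : Ideal R}
    (habc : ∀ a ∈ I, ∀ b ∈ I, ∀ c ∈ I, a * b * c ∈ J) : I ^ 3 ≤ J := by
  have hII : I * I ≤ J.colon I := Ideal.mul_le.2 fun a ha b hb =>
    Submodule.mem_colon.2 fun c hc => habc a ha b hb c hc
  rw [pow_succ, pow_two]
  exact Ideal.mul_le.2 fun m hm c hc => Submodule.mem_colon.1 (hII hm) c hc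

namespace Phi1AbsPrime

variable {R : Type*} [CommRing R] {I φI : Ideal R} {x y z : R}

theorem mul_mem_of_not_mem (h : Phi1AbsPrime I (φI : Set R)) (hx : ¬ IsUnit x)
    (hy : ¬ IsUnit y) (hz : ¬ IsUnit z) (hxyz : x * y * z ∈ I) (hxy : x * y ∉ I)
    (hzI : z ∉ I) :
    x * y * z ∈ φI := by
  by_contra hφ
  exact (h x y z hx hy hz hxyz hφ).elim hxy hzI

theorem add_mul_add_mul_add_mem (h : Phi1AbsPrime I (φI : Set R)) (hφ : φI ≤ I)
    (hxyz : x * y * z ∈ φI) (hxy : x * y ∉ I) (hz : z ∉ I) (hxz : x * z ∉ I)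
    (hyz : y * z ∉ I)
    {a b c : R} (ha : a ∈ I) (hb : b ∈ I) (hc : c ∈ I) :
    (x + a) * (y + b) * (z + c) ∈ φI := by
  have hxyzI : x * y * z ∈ I := hφ hxyz
  have hxa : x + a - x ∈ I := by simpa using ha
  have hyb : y + b - y ∈ I := by simpa using hb
  have hzc : z + c - z ∈ I := by simpa using hc
  have hxy' : (x + a) * (y + b) - x * y ∈ I := I.mul_sub_mul_mem hxa hyb
  have hxyz' : (x + a) * (y + b) * (z + c) - x * y * z ∈ I := I.mul_sub_mul_mem hxy' hzc
  refine h.mul_mem_of_not_mem ?_ ?_ ?_ ((I.sub_mem_iff_left hxyzI).1 hxyz')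
    (fun hI => hxy ((I.sub_mem_iff_right hI).1 hxy'))
    (fun hI => hz ((I.sub_mem_iff_right hI).1 hzc))
  · exact I.not_isUnit_add_of_mul_mem hyz (by rwa [mul_comm, ← mul_assoc]) ha
  · exact I.not_isUnit_add_of_mul_mem hxz (by rwa [mul_right_comm]) hb
  · exact I.not_isUnit_add_of_mul_mem hxy hxyzI hc

end Phi1AbsPrime

theorem stmt_12_general {R : Type*} [CommRing R] (I : Ideal R)
    (φI : Ideal R) (hφ : φI ≤ I) (h : Phi1AbsPrime I (φI : Set R))
    (x y z : R)
    (h1 : x * y * z ∈ φI) (h2 : x * y ∉ I) (h3 : z ∉ I)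
    (hxz : x * z ∉ I) (hyz : y * z ∉ I) :
    (∀ a ∈ I, x * z * a ∈ φI) ∧ (∀ a ∈ I, y * z * a ∈ φI) ∧
    (∀ a ∈ I, ∀ b ∈ I, x * a * b ∈ φI) ∧
    (∀ a ∈ I, ∀ b ∈ I, y * a * b ∈ φI) ∧
    (∀ a ∈ I, ∀ b ∈ I, z * a * b ∈ φI) ∧
    I ^ 3 ≤ φI := by
  have P {a b c : R} (ha : a ∈ I) (hb : b ∈ I) (hc : c ∈ I) :=
    h.add_mul_add_mul_add_mem hφ h1 h2 h3 hxz hyz ha hb hc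
  have h0 := I.zero_mem
  refine ⟨fun a ha => ?_, fun a ha => ?_, fun a ha b hb => ?_, fun a ha b hb => ?_,
    fun a ha b hb => ?_, Ideal.pow_three_le_of_forall_mul_mul_mem fun a ha b hb c hc => ?_⟩
  · convert φI.sub_mem (P h0 ha h0) (P h0 h0 h0) using 1; ring
  · convert φI.sub_mem (P ha h0 h0) (P h0 h0 h0) using 1; ring
  · convert φI.add_mem (φI.sub_mem (φI.sub_mem (P h0 ha hb) (P h0 ha h0)) (P h0 h0 hb))
      (P h0 h0 h0) using 1; ring
  · convert φI.add_mem (φI.sub_mem (φI.sub_mem (P ha h0 hb) (P ha h0 h0)) (P h0 h0 hb))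
      (P h0 h0 h0) using 1; ring
  · convert φI.add_mem (φI.sub_mem (φI.sub_mem (P ha hb h0) (P ha h0 h0)) (P h0 hb h0))
      (P h0 h0 h0) using 1; ring
  · convert φI.sub_mem (φI.add_mem (φI.add_mem (φI.add_mem (φI.sub_mem (φI.sub_mem
      (φI.sub_mem (P ha hb hc) (P ha hb h0)) (P ha h0 hc)) (P h0 hb hc)) (P ha h0 h0))
      (P h0 hb h0)) (P h0 h0 hc)) (P h0 h0 h0) using 1; ring

theorem stmt_12 {R : Type*} [CommRing R] (I : Ideal R) (hI : I ≠ ⊤)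
    (φI : Ideal R) (hφ : φI ≤ I) (h : Phi1AbsPrime I (φI : Set R))
    (x y z : R) (hx : ¬ IsUnit x) (hy : ¬ IsUnit y) (hz : ¬ IsUnit z)
    (h1 : x * y * z ∈ φI) (h2 : x * y ∉ I) (h3 : z ∉ I)
    (hxz : x * z ∉ I) (hyz : y * z ∉ I) :
    (∀ a ∈ I, x * z * a ∈ φI) ∧ (∀ a ∈ I, y * z * a ∈ φI) ∧
    (∀ a ∈ I, ∀ b ∈ I, x * a * b ∈ φI) ∧
    (∀ a ∈ I, ∀ b ∈ I, y * a * b ∈ φI) ∧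
    (∀ a ∈ I, ∀ b ∈ I, z * a * b ∈ φI) ∧
    I ^ 3 ≤ φI :=
  stmt_12_general I φI hφ h x y z h1 h2 h3 hxz hyz
end

section
/- Let R be a commutative ring and a a nonunit element with (0 : a) ⊆ (a). Then the principal ideal (a) is an almost 1-absorbing prime ideal (φ₂-1-absorbing prime, φ₂(I) = I²) if and only if (a) is a 1-absorbing prime ideal. -/
theorem Phi1AbsPrime.mono_right {R : Type*} [CommRing R] {I : Ideal R} {S T : Set R}
    (hST : S ⊆ T) (h : Phi1AbsPrime I S) : Phi1AbsPrime I T :=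
  fun x y z hx hy hz hI hT ↦ h x y z hx hy hz hI (fun hS ↦ hT (hST hS))

theorem Ideal.mem_span_singleton_of_mul_mem_span_singleton_sq {R : Type*} [CommRing R] {a r : R}
    (hann : ∀ s : R, s * a = 0 → s ∈ Ideal.span {a})
    (hr : r * a ∈ Ideal.span {a} ^ 2) : r ∈ Ideal.span {a} := by
  rw [sq, Ideal.span_singleton_mul_span_singleton, Ideal.mem_span_singleton'] at hr
  obtain ⟨s, hs⟩ := hr
  have hann' : (r - s * a) * a = 0 := by linear_combination -hs
  simpa using
    Ideal.add_mem _ (hann _ hann') (Ideal.mul_mem_left _ s (Ideal.mem_span_singleton_self a))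

/-- An element `x * y * z ∈ (a)²` is handled through the translate `x * y * (z + a)`, which
lies in `(a)`: either it escapes `(a)²`, or `x * y * a ∈ (a)²` and the annihilator condition
gives `x * y ∈ (a)`. -/
theorem Phi1AbsPrime.of_span_singleton_sq {R : Type*} [CommRing R] {a : R}
    (hann : ∀ r : R, r * a = 0 → r ∈ Ideal.span {a})
    (H : Phi1AbsPrime (Ideal.span {a}) ((Ideal.span {a} ^ 2 : Ideal R) : Set R)) :
    Phi1AbsPrime (Ideal.span {a}) ∅ := by
  intro x y z hx hy hz hxyz _
  have ha : a ∈ Ideal.span {a} := Ideal.mem_span_singleton_self a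
  by_cases hsq : x * y * z ∈ Ideal.span {a} ^ 2
  swap
  · exact H x y z hx hy hz hxyz hsq
  have hshift : x * y * (z + a) = x * y * z + x * y * a := by ring
  have hshift_mem : x * y * (z + a) ∈ Ideal.span {a} :=
    hshift ▸ Ideal.add_mem _ hxyz (Ideal.mul_mem_left _ _ ha)
  by_cases hshift_sq : x * y * (z + a) ∈ Ideal.span {a} ^ 2
  · have hxya : x * y * a ∈ Ideal.span {a} ^ 2 := by
      simpa [hshift] using Ideal.sub_mem _ hshift_sq hsq
    exact Or.inl (Ideal.mem_span_singleton_of_mul_mem_span_singleton_sq hann hxya)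
  by_cases hunit : IsUnit (z + a)
  · exact Or.inl ((Ideal.mul_unit_mem_iff_mem _ hunit).mp hshift_mem)
  rcases H x y (z + a) hx hy hunit hshift_mem hshift_sq with hxy | hza
  · exact Or.inl hxy
  · exact Or.inr (by simpa using Ideal.sub_mem _ hza ha)

theorem stmt_13_general {R : Type*} [CommRing R] (a : R)
    (hann : ∀ r : R, r * a = 0 → r ∈ Ideal.span {a}) :
    Phi1AbsPrime (Ideal.span {a}) ((Ideal.span {a} ^ 2 : Ideal R) : Set R) ↔
      Phi1AbsPrime (Ideal.span {a}) (∅ : Set R) :=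
  ⟨Phi1AbsPrime.of_span_singleton_sq hann, Phi1AbsPrime.mono_right (Set.empty_subset _)⟩

theorem stmt_13 {R : Type*} [CommRing R] (a : R) (ha : ¬ IsUnit a)
    (hproper : Ideal.span {a} ≠ ⊤)
    (hann : ∀ r : R, r * a = 0 → r ∈ Ideal.span {a}) :
    Phi1AbsPrime (Ideal.span {a}) ((Ideal.span {a} ^ 2 : Ideal R) : Set R) ↔
      Phi1AbsPrime (Ideal.span {a}) (∅ : Set R) :=
  stmt_13_general a hann
end

section
/- Let R be a commutative ring that is not quasi-local (has at least two maximal ideals), I a proper ideal, and suppose (φ(I) : x) is not a maximal ideal for each x ∈ I. Then I is φ-prime if and only if I is φ-1-absorbing prime. -/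
theorem Submodule.le_of_diff_subset_s14 {R M : Type*} [Ring R] [AddCommGroup M] [Module R M]
    {J m K : Submodule R M} (hJm : J < m) (hK : (m : Set M) \ J ⊆ K) : m ≤ K := by
  obtain ⟨t, htm, htJ⟩ := SetLike.exists_of_lt hJm
  have htK : t ∈ K := hK ⟨htm, htJ⟩
  intro e hem
  by_cases heJ : e ∈ J
  · have hetK : e + t ∈ K := hK ⟨m.add_mem hem htm, fun h => htJ (by simpa using J.sub_mem h heJ)⟩
    simpa using K.sub_mem hetK htK
  · exact hK ⟨hem, heJ⟩

namespace Ideal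

variable {R : Type*} [CommRing R]

theorem exists_not_isUnit_notMem_of_isMaximal
    (hnl : ∃ m₁ m₂ : Ideal R, m₁.IsMaximal ∧ m₂.IsMaximal ∧ m₁ ≠ m₂)
    {m : Ideal R} (hm : m.IsMaximal) : ∃ d, ¬IsUnit d ∧ d ∉ m := by
  obtain ⟨n, hn, hnm⟩ : ∃ n : Ideal R, n.IsMaximal ∧ n ≠ m := by
    obtain ⟨m₁, m₂, hm₁, hm₂, hne⟩ := hnl
    by_cases h : m₁ = m
    · exact ⟨m₂, hm₂, h ▸ hne.symm⟩
    · exact ⟨m₁, hm₁, h⟩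
  obtain ⟨d, hdn, hdm⟩ := Set.not_subset.mp fun h => hnm (hn.eq_of_le hm.ne_top h)
  exact ⟨d, fun hu => hn.ne_top (n.eq_top_of_isUnit_mem hdn hu), hdm⟩

theorem eq_top_of_forall_not_isUnit_notMem
    (hnl : ∃ m₁ m₂ : Ideal R, m₁.IsMaximal ∧ m₂.IsMaximal ∧ m₁ ≠ m₂)
    {J K : Ideal R} (hJ : J ≠ ⊤) (hJmax : ¬J.IsMaximal)
    (hK : ∀ e, ¬IsUnit e → e ∉ J → e ∈ K) : K = ⊤ := by
  obtain ⟨m, hm, hJm⟩ := J.exists_le_maximal hJ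
  have hJltm : J < m := lt_of_le_of_ne hJm fun h => hJmax (h ▸ hm)
  have hmK : m ≤ K := Submodule.le_of_diff_subset_s14 hJltm fun e ⟨hem, heJ⟩ =>
    hK e (fun hu => hm.ne_top (m.eq_top_of_isUnit_mem hem hu)) heJ
  obtain ⟨d, hd, hdm⟩ := exists_not_isUnit_notMem_of_isMaximal hnl hm
  have hdK : d ∈ K := hK d hd fun h => hdm (hJm h)
  exact hm.out.2 K (lt_of_le_not_ge hmK fun h => hdm (h hdK))

end Ideal

theorem stmt_14_general {R : Type*} [CommRing R]
    (hnl : ∃ m₁ m₂ : Ideal R, m₁.IsMaximal ∧ m₂.IsMaximal ∧ m₁ ≠ m₂)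
    (I : Ideal R) (φI : Ideal R)
    (hcol : ∀ x ∈ I, ¬ (φI.colon (Ideal.span {x})).IsMaximal) :
    (∀ x y : R, x * y ∈ I → x * y ∉ φI → x ∈ I ∨ y ∈ I) ↔
      Phi1AbsPrime I (φI : Set R) := by
  refine ⟨fun hp x y z _ _ _ => hp (x * y) z, fun h1 a b hab hnφ => ?_⟩
  by_cases ha : IsUnit a
  · exact .inr ((I.unit_mul_mem_iff_mem ha).1 hab)
  by_cases hb : IsUnit b
  · exact .inl ((I.mul_unit_mem_iff_mem hb).1 hab)
  refine or_iff_not_imp_right.2 fun hbI => ?_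
  have hJ : φI.colon (Ideal.span {a * b}) ≠ ⊤ := by
    simpa [Ideal.colon_span, Submodule.colon_eq_top_iff_subset] using hnφ
  have hK : ∀ e, ¬IsUnit e → e ∉ φI.colon (Ideal.span {a * b}) →
      e ∈ I.colon (Ideal.span {a}) := by
    intro e he heJ
    rw [Ideal.mem_colon_span_singleton] at heJ ⊢
    have habe : a * e * b ∈ I := by simpa [mul_right_comm] using I.mul_mem_right e hab
    have hnφ' : a * e * b ∉ φI := by rwa [mul_right_comm, mul_comm]
    simpa [mul_comm e, hbI] using h1 a e b ha he hb habe hnφ'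
  have htop := Ideal.eq_top_of_forall_not_isUnit_notMem hnl hJ (hcol _ hab) hK
  simpa [Ideal.colon_span, Submodule.colon_eq_top_iff_subset] using htop

theorem stmt_14 {R : Type*} [CommRing R]
    (hnl : ∃ m₁ m₂ : Ideal R, m₁.IsMaximal ∧ m₂.IsMaximal ∧ m₁ ≠ m₂)
    (I : Ideal R) (hI : I ≠ ⊤) (φI : Ideal R) (hφ : φI ≤ I)
    (hcol : ∀ x ∈ I, ¬ (φI.colon (Ideal.span {x})).IsMaximal) :
    (∀ x y : R, x * y ∈ I → x * y ∉ φI → x ∈ I ∨ y ∈ I) ↔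
      Phi1AbsPrime I (φI : Set R) :=
  stmt_14_general hnl I φI hcol
end

section
/- If I is a φ-1-absorbing prime ideal of a commutative ring R, then I/φ(I) is a weakly 1-absorbing prime ideal of the quotient ring R/φ(I). -/
def Ideal.IsWeaklyOneAbsorbingPrime {S : Type*} [CommRing S] (J : Ideal S) : Prop :=
  J ≠ ⊤ ∧ ∀ a b c : S, ¬ IsUnit a → ¬ IsUnit b → ¬ IsUnit c →
    a * b * c ≠ 0 → a * b * c ∈ J → a * b ∈ J ∨ c ∈ J

theorem Ideal.map_quotientMk_ne_top {R : Type*} [CommRing R] {I J : Ideal R} (hJ : J ≤ I)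
    (hI : I ≠ ⊤) : I.map (Ideal.Quotient.mk J) ≠ ⊤ := fun htop => hI <| by
  rw [← Ideal.comap_map_mk hJ, htop, Ideal.comap_top]

theorem Phi1AbsPrime.isWeaklyOneAbsorbingPrime_map_quotientMk {R : Type*} [CommRing R]
    {I φI : Ideal R} (hI : I ≠ ⊤) (hφ : φI ≤ I) (h : Phi1AbsPrime I φI) :
    (I.map (Ideal.Quotient.mk φI)).IsWeaklyOneAbsorbingPrime := by
  refine ⟨Ideal.map_quotientMk_ne_top hφ hI, fun a b c ha hb hc hne hmem => ?_⟩
  obtain ⟨x, rfl⟩ := Ideal.Quotient.mk_surjective a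
  obtain ⟨y, rfl⟩ := Ideal.Quotient.mk_surjective b
  obtain ⟨z, rfl⟩ := Ideal.Quotient.mk_surjective c
  simp only [← map_mul, Ideal.mem_quotient_iff_mem hφ, ne_eq, Ideal.Quotient.eq_zero_iff_mem]
    at hne hmem ⊢
  exact h x y z (mt (IsUnit.map _) ha) (mt (IsUnit.map _) hb) (mt (IsUnit.map _) hc) hmem hne

theorem stmt_15 {R : Type*} [CommRing R] (I : Ideal R) (hI : I ≠ ⊤)
    (φI : Ideal R) (hφ : φI ≤ I) (h : Phi1AbsPrime I (φI : Set R)) :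
    Ideal.map (Ideal.Quotient.mk φI) I ≠ ⊤ ∧
      ∀ a b c : R ⧸ φI, ¬ IsUnit a → ¬ IsUnit b → ¬ IsUnit c →
        a * b * c ≠ 0 → a * b * c ∈ Ideal.map (Ideal.Quotient.mk φI) I →
          a * b ∈ Ideal.map (Ideal.Quotient.mk φI) I ∨
            c ∈ Ideal.map (Ideal.Quotient.mk φI) I :=
  h.isWeaklyOneAbsorbingPrime_map_quotientMk hI hφ
end
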